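/- (ε-orthogonality bound) Let K ≥ 2, δ > 0, and 0 < ε < 1/2. Suppose Â₁, …, Â_K are n×n real matrices such that for every entry position (i,j) there exists a unique index ℓ with Â_{ℓ,ij} ≥ Â_{ℓ',ij} + δ for all ℓ' ≠ ℓ. Define A_{k,ij} = exp(γ·Â_{k,ij}) / Σ_{r=1}^K exp(γ·Â_{r,ij}). If γ ≥ (1/δ)·ln(K·√(1-2ε)/(1 - √(1-2ε)) + 1), then for all k ≠ k' and all entries (i,j), A_{k,ij}·A_{k',ij} ≤ ε. -/
import Mathlib


set_option maxHeartbeats 1000000 in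
theorem eps_orthogonality_bound (K n : ℕ) (hK : 2 ≤ K) (δ ε γ : ℝ)
    (hδ : 0 < δ) (hε0 : 0 < ε) (hε : ε < 1 / 2)
    (Ahat : Fin K → Matrix (Fin n) (Fin n) ℝ)
    (hgap : ∀ i j : Fin n, ∃! ℓ : Fin K, ∀ ℓ' : Fin K, ℓ' ≠ ℓ →
      Ahat ℓ i j ≥ Ahat ℓ' i j + δ)
    (A : Fin K → Matrix (Fin n) (Fin n) ℝ)
    (hA : ∀ k i j, A k i j =
      Real.exp (γ * Ahat k i j) / ∑ r : Fin K, Real.exp (γ * Ahat r i j))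
    (hγ : γ ≥ (1 / δ) * Real.log (K * Real.sqrt (1 - 2 * ε) /
      (1 - Real.sqrt (1 - 2 * ε)) + 1)) :
    ∀ k k' : Fin K, k ≠ k' → ∀ i j : Fin n, A k i j * A k' i j ≤ ε := by
  intro k k' hkk' i j
  set s := Real.sqrt (1 - 2 * ε) with hs
  have hs0 : 0 < s := Real.sqrt_pos.2 (by linarith)
  have hssq : s ^ 2 = 1 - 2 * ε := Real.sq_sqrt (by linarith)
  have hs1 : s < 1 := by nlinarith
  have hK2 : (2 : ℝ) ≤ (K : ℝ) := by exact_mod_cast hK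
  have harg0 : (0 : ℝ) < 1 - s := by linarith
  have harg1 : (1 : ℝ) ≤ (K : ℝ) * s / (1 - s) + 1 := by
    have : (0 : ℝ) ≤ (K : ℝ) * s / (1 - s) := by positivity
    linarith
  have hγδ : Real.log ((K : ℝ) * s / (1 - s) + 1) ≤ γ * δ := by
    have h := hγ
    rw [ge_iff_le, div_mul_eq_mul_div, div_le_iff₀ hδ] at h
    linarith [h]
  have hγ0 : 0 ≤ γ := by
    have hlog0 : 0 ≤ Real.log ((K : ℝ) * s / (1 - s) + 1) := Real.log_nonneg harg1
    have : 0 ≤ (1 / δ) * Real.log ((K : ℝ) * s / (1 - s) + 1) := by positivity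
    linarith [hγ]
  have hexp : (K : ℝ) * s / (1 - s) + 1 ≤ Real.exp (γ * δ) := by
    calc (K : ℝ) * s / (1 - s) + 1
        = Real.exp (Real.log ((K : ℝ) * s / (1 - s) + 1)) :=
          (Real.exp_log (by linarith)).symm
      _ ≤ Real.exp (γ * δ) := Real.exp_le_exp.2 hγδ
  obtain ⟨ℓ, hℓ, -⟩ := hgap i j
  set S := ∑ r : Fin K, Real.exp (γ * Ahat r i j) with hSdef
  have hSpos : 0 < S :=
    Finset.sum_pos (fun r _ => Real.exp_pos _) ⟨ℓ, Finset.mem_univ ℓ⟩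
  have hApos : ∀ r, 0 < A r i j := by
    intro r; rw [hA]; exact div_pos (Real.exp_pos _) hSpos
  have hAsum : ∑ r : Fin K, A r i j = 1 := by
    simp only [hA]
    rw [← Finset.sum_div, div_self hSpos.ne']
  have hA1 : ∀ r, A r i j ≤ 1 := by
    intro r
    rw [← hAsum]
    exact Finset.single_le_sum (fun m _ => (hApos m).le) (Finset.mem_univ r)
  have hsum2 : A k i j + A k' i j ≤ 1 := by
    have h1 : ∑ r ∈ ({k, k'} : Finset (Fin K)), A r i j ≤ ∑ r : Fin K, A r i j :=
      Finset.sum_le_sum_of_subset_of_nonneg (Finset.subset_univ _)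
        (fun r _ _ => (hApos r).le)
    rwa [Finset.sum_pair hkk', hAsum] at h1
  have hbound : ∀ m, m ≠ ℓ → A m i j ≤ Real.exp (-(γ * δ)) := by
    intro m hm
    have hgapm := hℓ m hm
    have hSle : Real.exp (γ * Ahat ℓ i j) ≤ S :=
      Finset.single_le_sum (f := fun r => Real.exp (γ * Ahat r i j))
        (fun r _ => (Real.exp_pos _).le) (Finset.mem_univ ℓ)
    rw [hA]
    calc Real.exp (γ * Ahat m i j) / S
        ≤ Real.exp (γ * Ahat m i j) / Real.exp (γ * Ahat ℓ i j) :=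
          div_le_div_of_nonneg_left (Real.exp_pos _).le (Real.exp_pos _) hSle
      _ = Real.exp (γ * Ahat m i j - γ * Ahat ℓ i j) := by
          rw [Real.exp_sub]
      _ ≤ Real.exp (-(γ * δ)) := by
          apply Real.exp_le_exp.2
          nlinarith [hgapm]
  rcases le_or_gt (1 / 4 : ℝ) ε with h14 | h14
  · nlinarith [sq_nonneg (A k i j - A k' i j), hsum2, (hApos k).le, (hApos k').le]
  · have hs2 : 2 ≤ (1 + s) ^ 2 := by nlinarith
    have hts : Real.exp (-(γ * δ)) ≤ ε := by
      have h1 : (1 + s) / (1 - s) ≤ Real.exp (γ * δ) := by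
        have h2 : (1 + s) / (1 - s) ≤ (K : ℝ) * s / (1 - s) + 1 := by
          rw [div_add' _ _ _ harg0.ne', div_le_div_iff₀ harg0 harg0]
          nlinarith [mul_nonneg (mul_nonneg (by linarith : (0:ℝ) ≤ (K:ℝ) - 2) hs0.le) harg0.le]
        linarith
      rw [Real.exp_neg]
      have hepos : (0 : ℝ) < (1 + s) / (1 - s) := by positivity
      have h3 : (Real.exp (γ * δ))⁻¹ ≤ ((1 + s) / (1 - s))⁻¹ := by
        apply inv_anti₀ hepos h1
      have h4 : ((1 + s) / (1 - s))⁻¹ = (1 - s) / (1 + s) := by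
        rw [inv_div]
      have h5 : (1 - s) / (1 + s) ≤ ε := by
        rw [div_le_iff₀ (by linarith : (0:ℝ) < 1 + s)]
        nlinarith [hs2, harg0.le, hssq]
      calc (Real.exp (γ * δ))⁻¹ ≤ (1 - s) / (1 + s) := h4 ▸ h3
        _ ≤ ε := h5
    rcases eq_or_ne k ℓ with rfl | hk
    · have hk' : k' ≠ k := hkk'.symm
      have h1 : A k' i j ≤ ε := (hbound k' hk').trans hts
      calc A k i j * A k' i j ≤ 1 * ε :=
            mul_le_mul (hA1 k) h1 (hApos k').le zero_le_one
        _ = ε := one_mul ε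
    · have h1 : A k i j ≤ ε := (hbound k hk).trans hts
      nlinarith [hA1 k', (hApos k).le, (hApos k').le]
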